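/- arXiv:2004.01779 — 6 statements merged into one kernel-verified Lean document; each statement's English description precedes it below -/
import Mathlib

section
/- For positive reals x and y with x ≠ y and complex z with 0 < Re z < 2, (sin(πz/2)/π) · ∫₀^∞ λ^{-z/2}(x+λ)^{-1}(y+λ)^{-1} dλ = -(x^{-z/2} - y^{-z/2})/(x - y). -/
/-! Split the integrand by partial fractions, `(x+λ)⁻¹(y+λ)⁻¹ = (y-x)⁻¹((x+λ)⁻¹ - (y+λ)⁻¹)`.
With `s = z/2`, each piece is Euler's integral `∫₀^∞ λ^{-s}(a+λ)⁻¹ dλ = a^{-s} π / sin(πs)`,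
which the substitution `λ = a u/(1-u)` turns into the Beta integral `B(1-s, s) = Γ(1-s)Γ(s)`,
evaluated by the reflection formula. -/

open MeasureTheory Set Complex
open scoped Real

namespace EulerIntegral

variable {a : ℝ} {s : ℂ}

lemma sin_pi_mul_ne_zero (h0 : 0 < s.re) (h1 : s.re < 1) : sin (π * s) ≠ 0 := by
  rw [sin_ne_zero_iff]
  intro k hk
  have hre : s.re = k := by
    simpa using congrArg re (mul_left_cancel₀ (ofReal_ne_zero.2 Real.pi_ne_zero)
      (hk.trans (mul_comm _ _)))
  rcases le_or_gt k 0 with hk0 | hk0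
  · have : (k : ℝ) ≤ 0 := by exact_mod_cast hk0
    linarith
  · have : (1 : ℝ) ≤ k := by exact_mod_cast hk0
    linarith

lemma betaIntegral_one_sub_eq_pi_div_sin (h0 : 0 < s.re) (h1 : s.re < 1) :
    betaIntegral (1 - s) s = π / sin (π * s) := by
  have hs : 0 < (1 - s).re := by simp only [sub_re, one_re]; linarith
  rw [← Gamma_mul_Gamma_one_sub, mul_comm, Gamma_mul_Gamma_eq_betaIntegral hs h0,
    sub_add_cancel, Gamma_one, one_mul]

lemma intervalIntegrable_betaIntegrand_one_sub (h0 : 0 < s.re) (h1 : s.re < 1) :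
    IntervalIntegrable (fun u : ℝ => (u : ℂ) ^ (-s) * ((1 - u : ℝ) : ℂ) ^ (s - 1)) volume 0 1 := by
  have hs : 0 < (1 - s).re := by simp only [sub_re, one_re]; linarith
  simpa using betaIntegral_convergent hs h0

lemma integral_Ioo_betaIntegrand_one_sub (h0 : 0 < s.re) (h1 : s.re < 1) :
    ∫ u in Ioo (0 : ℝ) 1, (u : ℂ) ^ (-s) * ((1 - u : ℝ) : ℂ) ^ (s - 1) = π / sin (π * s) := by
  rw [← betaIntegral_one_sub_eq_pi_div_sin h0 h1, betaIntegral,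
    intervalIntegral.integral_of_le zero_le_one, ← integral_Ioc_eq_integral_Ioo]
  simp

noncomputable def betaSubst (a : ℝ) (u : ℝ) : ℝ := a * u / (1 - u)

lemma image_betaSubst_Ioo (ha : 0 < a) : betaSubst a '' Ioo 0 1 = Ioi 0 := by
  ext t
  constructor
  · rintro ⟨u, ⟨hu0, hu1⟩, rfl⟩
    exact div_pos (mul_pos ha hu0) (by linarith)
  · intro (ht : 0 < t)
    refine ⟨t / (a + t), ⟨by positivity, (div_lt_one (by linarith)).2 (by linarith)⟩, ?_⟩
    have : a + t ≠ 0 := by positivity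
    rw [betaSubst, one_sub_div this, add_sub_cancel_right]
    field_simp

lemma injOn_betaSubst (ha : 0 < a) : InjOn (betaSubst a) (Ioo 0 1) := by
  intro u ⟨_, hu1⟩ v ⟨_, hv1⟩ h
  have h1u : 1 - u ≠ 0 := by linarith
  have h1v : 1 - v ≠ 0 := by linarith
  simp only [betaSubst] at h
  field_simp at h
  nlinarith

lemma hasDerivAt_betaSubst {u : ℝ} (hu : u ≠ 1) :
    HasDerivAt (betaSubst a) (a / (1 - u) ^ 2) u := by
  have h1u : 1 - u ≠ 0 := sub_ne_zero.2 hu.symm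
  have h : HasDerivAt (fun v => a * v / (1 - v)) ((a * 1 * (1 - u) - a * u * -1) / (1 - u) ^ 2) u :=
    ((hasDerivAt_id' u).const_mul a).div ((hasDerivAt_id' u).const_sub 1) h1u
  exact h.congr_deriv (by ring)

lemma hasDerivWithinAt_betaSubst :
    ∀ u ∈ Ioo (0 : ℝ) 1, HasDerivWithinAt (betaSubst a) (a / (1 - u) ^ 2) (Ioo 0 1) u :=
  fun _ hu => (hasDerivAt_betaSubst hu.2.ne).hasDerivWithinAt

lemma abs_deriv_smul_eulerIntegrand (ha : 0 < a) {u : ℝ} (hu : u ∈ Ioo (0 : ℝ) 1) :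
    |a / (1 - u) ^ 2| • (((betaSubst a u : ℝ) : ℂ) ^ (-s) * ((a : ℂ) + betaSubst a u)⁻¹) =
      (a : ℂ) ^ (-s) * ((u : ℂ) ^ (-s) * ((1 - u : ℝ) : ℂ) ^ (s - 1)) := by
  obtain ⟨hu0, hu1⟩ := hu
  have h1u : 0 < 1 - u := by linarith
  have hV : ((1 - u : ℝ) : ℂ) ≠ 0 := ofReal_ne_zero.2 h1u.ne'
  have hA : (a : ℂ) ≠ 0 := ofReal_ne_zero.2 ha.ne'
  have hsum : (a : ℂ) + betaSubst a u = ((a : ℂ) * ((1 - u : ℝ) : ℂ)⁻¹) := by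
    rw [← ofReal_add, ← ofReal_inv, ← ofReal_mul, betaSubst]
    congr 1
    field_simp
    ring
  have harg : ((1 - u : ℝ) : ℂ).arg ≠ π := by
    rw [arg_ofReal_of_nonneg h1u.le]
    exact Real.pi_ne_zero.symm
  have hpow : ((betaSubst a u : ℝ) : ℂ) ^ (-s)
      = (a : ℂ) ^ (-s) * (u : ℂ) ^ (-s) * ((1 - u : ℝ) : ℂ) ^ s := by
    rw [betaSubst, div_eq_mul_inv, ofReal_mul, mul_cpow_ofReal_nonneg (by positivity)
      (by positivity), ofReal_mul, mul_cpow_ofReal_nonneg ha.le hu0.le, ofReal_inv,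
      inv_cpow _ _ harg, ← cpow_neg, neg_neg]
  rw [hsum, hpow, abs_of_pos (by positivity), real_smul, cpow_sub _ _ hV, cpow_one]
  push_cast
  field_simp

lemma integral_Ioi_cpow_neg_mul_inv_add (ha : 0 < a) (h0 : 0 < s.re) (h1 : s.re < 1) :
    ∫ l in Ioi (0 : ℝ), (l : ℂ) ^ (-s) * ((a : ℂ) + l)⁻¹ = (a : ℂ) ^ (-s) * (π / sin (π * s)) := by
  rw [← image_betaSubst_Ioo ha, integral_image_eq_integral_abs_deriv_smul measurableSet_Ioo
      hasDerivWithinAt_betaSubst (injOn_betaSubst ha),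
    setIntegral_congr_fun measurableSet_Ioo fun u hu => abs_deriv_smul_eulerIntegrand ha hu,
    integral_const_mul, integral_Ioo_betaIntegrand_one_sub h0 h1]

lemma integrableOn_Ioi_cpow_neg_mul_inv_add (ha : 0 < a) (h0 : 0 < s.re) (h1 : s.re < 1) :
    IntegrableOn (fun l : ℝ => (l : ℂ) ^ (-s) * ((a : ℂ) + l)⁻¹) (Ioi 0) := by
  rw [← image_betaSubst_Ioo ha, integrableOn_image_iff_integrableOn_abs_deriv_smul
    measurableSet_Ioo hasDerivWithinAt_betaSubst (injOn_betaSubst ha)]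
  refine IntegrableOn.congr_fun ?_ (fun u hu => (abs_deriv_smul_eulerIntegrand ha hu).symm)
    measurableSet_Ioo
  exact ((intervalIntegrable_iff_integrableOn_Ioo_of_le zero_le_one).1
    (intervalIntegrable_betaIntegrand_one_sub h0 h1)).const_mul _

lemma integral_Ioi_cpow_neg_mul_inv_add_mul_inv_add {x y : ℝ} (hx : 0 < x) (hy : 0 < y)
    (hxy : x ≠ y) (h0 : 0 < s.re) (h1 : s.re < 1) :
    ∫ l in Ioi (0 : ℝ), (l : ℂ) ^ (-s) * ((x : ℂ) + l)⁻¹ * ((y : ℂ) + l)⁻¹ =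
      ((y : ℂ) - x)⁻¹ * ((x : ℂ) ^ (-s) - (y : ℂ) ^ (-s)) * (π / sin (π * s)) := by
  have hyx : (y : ℂ) - x ≠ 0 := sub_ne_zero.2 (ofReal_injective.ne hxy.symm)
  have hsplit : ∀ l ∈ Ioi (0 : ℝ), (l : ℂ) ^ (-s) * ((x : ℂ) + l)⁻¹ * ((y : ℂ) + l)⁻¹ =
      ((y : ℂ) - x)⁻¹ * ((l : ℂ) ^ (-s) * ((x : ℂ) + l)⁻¹ - (l : ℂ) ^ (-s) * ((y : ℂ) + l)⁻¹) := by
    intro l (hl : 0 < l)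
    have hxl : (x : ℂ) + l ≠ 0 := by exact_mod_cast (add_pos hx hl).ne'
    have hyl : (y : ℂ) + l ≠ 0 := by exact_mod_cast (add_pos hy hl).ne'
    field_simp
    ring
  rw [setIntegral_congr_fun measurableSet_Ioi hsplit, integral_const_mul,
    integral_sub (integrableOn_Ioi_cpow_neg_mul_inv_add hx h0 h1)
      (integrableOn_Ioi_cpow_neg_mul_inv_add hy h0 h1),
    integral_Ioi_cpow_neg_mul_inv_add hx h0 h1, integral_Ioi_cpow_neg_mul_inv_add hy h0 h1]
  ring

end EulerIntegral

open EulerIntegral in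
theorem stmt_1 (x y : ℝ) (hx : 0 < x) (hy : 0 < y) (hxy : x ≠ y)
    (z : ℂ) (h0 : 0 < z.re) (h2 : z.re < 2) :
    (Complex.sin (Real.pi * z / 2) / Real.pi) *
      ∫ l in Set.Ioi (0:ℝ), (l : ℂ) ^ (-z / 2) * ((x : ℂ) + l)⁻¹ * ((y : ℂ) + l)⁻¹ =
    -(((x : ℂ) ^ (-z / 2) - (y : ℂ) ^ (-z / 2)) / ((x : ℂ) - (y : ℂ))) := by
  have hre : (z / 2).re = z.re / 2 := by simp
  have hs0 : 0 < (z / 2).re := by rw [hre]; linarith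
  have hs1 : (z / 2).re < 1 := by rw [hre]; linarith
  have hxy' : (x : ℂ) - y ≠ 0 := sub_ne_zero.2 (ofReal_injective.ne hxy)
  have hπ : (π : ℂ) ≠ 0 := ofReal_ne_zero.2 Real.pi_ne_zero
  have hsin : sin (π * z / 2) ≠ 0 := by
    rw [mul_div_assoc]
    exact sin_pi_mul_ne_zero hs0 hs1
  rw [neg_div, integral_Ioi_cpow_neg_mul_inv_add_mul_inv_add hx hy hxy hs0 hs1,
    ← neg_sub (x : ℂ)]
  field_simp
end

section
/- For a positive real y and complex z with 0 < Re z < 2, (sin(πz/2)/π) · ∫₀^∞ λ^{-z/2}(y+λ)^{-2} dλ = (z/2) · y^{-z/2 - 1}. -/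
/-!
Substituting `l = y t` and then `t = x / (1 - x)` turns the integral into
`y ^ (-z/2 - 1) B(1 - z/2, 1 + z/2) = y ^ (-z/2 - 1) (z/2) Γ(z/2) Γ(1 - z/2)`,
and Euler's reflection formula `Γ(s) Γ(1 - s) = π / sin (π s)` finishes the computation.
-/

open MeasureTheory Set Complex

theorem integral_Ioi_eq_integral_Ioo_div_one_sub {E : Type*} [NormedAddCommGroup E]
    [NormedSpace ℝ E] (g : ℝ → E) :
    ∫ t in Ioi (0 : ℝ), g t = ∫ x in Ioo (0 : ℝ) 1, ((1 - x) ^ 2)⁻¹ • g (x / (1 - x)) := by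
  have himage : (fun x : ℝ ↦ x / (1 - x)) '' Ioo 0 1 = Ioi 0 := by
    refine Subset.antisymm ?_ fun t (ht : 0 < t) ↦ ⟨t / (1 + t), ?_, ?_⟩
    · rintro _ ⟨x, ⟨hx0, hx1⟩, rfl⟩
      exact div_pos hx0 (sub_pos.2 hx1)
    · exact ⟨by positivity, (div_lt_one (by positivity)).2 (by linarith)⟩
    · field_simp
      ring
  have hinj : InjOn (fun x : ℝ ↦ x / (1 - x)) (Ioo 0 1) := by
    rintro a ⟨-, ha⟩ b ⟨-, hb⟩ hab
    rw [div_eq_div_iff (sub_pos.2 ha).ne' (sub_pos.2 hb).ne'] at hab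
    linarith
  have hderiv : ∀ x ∈ Ioo (0 : ℝ) 1,
      HasDerivWithinAt (fun x ↦ x / (1 - x)) (((1 - x) ^ 2)⁻¹) (Ioo 0 1) x := by
    rintro x ⟨-, hx⟩
    have h := (hasDerivAt_id' x).fun_div ((hasDerivAt_const x 1).fun_sub (hasDerivAt_id' x))
      (sub_pos.2 hx).ne'
    refine (h.congr_deriv ?_).hasDerivWithinAt
    field_simp
    ring
  rw [← himage, integral_image_eq_integral_abs_deriv_smul measurableSet_Ioo hderiv hinj]
  refine setIntegral_congr_fun measurableSet_Ioo fun x _ ↦ ?_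
  rw [abs_of_nonneg (by positivity)]

theorem integral_Ioi_cpow_mul_inv_one_add_sq (s : ℂ) :
    ∫ t in Ioi (0 : ℝ), (t : ℂ) ^ (-s) * ((1 + (t : ℂ)) ^ 2)⁻¹ =
      betaIntegral (1 - s) (1 + s) := by
  rw [integral_Ioi_eq_integral_Ioo_div_one_sub, betaIntegral,
    intervalIntegral.integral_of_le zero_le_one, integral_Ioc_eq_integral_Ioo]
  refine setIntegral_congr_fun measurableSet_Ioo fun x ⟨hx0, hx1⟩ ↦ ?_
  have h1x : (1 - x : ℂ) ≠ 0 := by exact_mod_cast (sub_pos.2 hx1).ne'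
  have hx : (x : ℂ) ^ s ≠ 0 := by simp [hx0.ne']
  have hx' : (1 - x : ℂ) ^ s ≠ 0 := by simp [h1x]
  rw [ofReal_div, div_cpow_ofReal_nonneg hx0.le (sub_pos.2 hx1).le, cpow_neg, cpow_neg,
    show 1 - s - 1 = -s by ring, show 1 + s - 1 = s by ring, cpow_neg, real_smul]
  push_cast
  field_simp
  ring

theorem integral_Ioi_cpow_mul_inv_add_sq {y : ℝ} (hy : 0 < y) (s : ℂ) :
    ∫ l in Ioi (0 : ℝ), (l : ℂ) ^ (-s) * (((y : ℂ) + l) ^ 2)⁻¹ =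
      (y : ℂ) ^ (-s - 1) * ∫ t in Ioi (0 : ℝ), (t : ℂ) ^ (-s) * ((1 + (t : ℂ)) ^ 2)⁻¹ := by
  have hy' : (y : ℂ) ≠ 0 := ofReal_ne_zero.2 hy.ne'
  have hscale := integral_comp_mul_left_Ioi
    (fun l : ℝ ↦ (l : ℂ) ^ (-s) * (((y : ℂ) + l) ^ 2)⁻¹) 0 hy
  rw [mul_zero, eq_inv_smul_iff₀ hy.ne'] at hscale
  rw [← hscale, real_smul, ← integral_const_mul, ← integral_const_mul]
  refine setIntegral_congr_fun measurableSet_Ioi fun t (ht : 0 < t) ↦ ?_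
  rw [ofReal_mul, mul_cpow_ofReal_nonneg hy.le ht.le, cpow_sub _ _ hy', cpow_one]
  field_simp

theorem betaIntegral_one_sub_one_add {s : ℂ} (h0 : 0 < s.re) (h1 : s.re < 1) :
    betaIntegral (1 - s) (1 + s) = s * (Gamma s * Gamma (1 - s)) := by
  rw [betaIntegral_eq_Gamma_mul_div _ _ (by rw [sub_re, one_re]; linarith)
      (by rw [add_re, one_re]; linarith),
    show 1 - s + (1 + s) = 2 by ring, Gamma_ofNat_eq_factorial, Nat.factorial_one, Nat.cast_one,
    div_one, add_comm, Gamma_add_one s (by rintro rfl; simp at h0)]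
  ring

theorem stmt_2 (y : ℝ) (hy : 0 < y) (z : ℂ) (h0 : 0 < z.re) (h2 : z.re < 2) :
    (Complex.sin (Real.pi * z / 2) / Real.pi) *
      ∫ l in Set.Ioi (0:ℝ), (l : ℂ) ^ (-z / 2) * (((y : ℂ) + l) ^ 2)⁻¹ =
    (z / 2) * (y : ℂ) ^ (-z / 2 - 1) := by
  have hs0 : 0 < (z / 2).re := by rw [div_ofNat_re]; linarith
  have hs1 : (z / 2).re < 1 := by rw [div_ofNat_re]; linarith
  have hΓ : Gamma (z / 2) * Gamma (1 - z / 2) ≠ 0 :=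
    mul_ne_zero (Gamma_ne_zero_of_re_pos hs0)
      (Gamma_ne_zero_of_re_pos (by rw [sub_re, one_re]; linarith))
  -- `Γ` has no zeros, so by the reflection formula `π / sin (π z / 2) ≠ 0`.
  have hsin : sin (Real.pi * z / 2) ≠ 0 := by
    rw [Gamma_mul_Gamma_one_sub, ← mul_div_assoc] at hΓ
    exact (div_ne_zero_iff.1 hΓ).2
  rw [neg_div, integral_Ioi_cpow_mul_inv_add_sq hy, integral_Ioi_cpow_mul_inv_one_add_sq,
    betaIntegral_one_sub_one_add hs0 hs1, Gamma_mul_Gamma_one_sub, ← mul_div_assoc]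
  field_simp
end

section
/- For any two functions u, v in L²(S¹), the Hilbert transform satisfies the product formula 𝓗(uv + (𝓗u)(𝓗v)) = u·(𝓗v) + v·(𝓗u). -/
/-!
On Fourier coefficients `𝓗` acts as multiplication by `sgn`, and the coefficients of a product
`f g` of two `L²` functions are the convolution `∑ₘ f̂(k - m) ĝ(m)` (Parseval applied to
`conj f · e_k` and `g`). The product formula thus reduces, term by term, to the identity
`sgn(a + b) (1 + sgn a sgn b) = sgn a + sgn b`.
-/

open MeasureTheory AddCircle
open scoped ComplexConjugate

theorem Int.sign_add_mul_one_add_sign_mul_sign (a b : ℤ) :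
    (a + b).sign * (1 + a.sign * b.sign) = a.sign + b.sign := by
  obtain ha | ha | ha := lt_trichotomy a 0 <;> obtain hb | hb | hb := lt_trichotomy b 0 <;>
    obtain hab | hab | hab := lt_trichotomy (a + b) 0 <;>
    simp [Int.sign_eq_neg_one_of_neg, Int.sign_eq_one_of_pos, *] <;> omega

theorem HilbertBasis.repr_apply_of_apply_eq_smul {ι 𝕜 E : Type*} [RCLike 𝕜]
    [NormedAddCommGroup E] [InnerProductSpace 𝕜 E] (b : HilbertBasis ι 𝕜 E) {A : E →L[𝕜] E}
    {c : ι → 𝕜} (hA : ∀ i, A (b i) = c i • b i) (x : E) (i : ι) :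
    b.repr (A x) i = c i * b.repr x i := by
  classical
  have h := ((b.hasSum_repr x).mapL A).mapL (innerSL 𝕜 (b i))
  simp only [map_smul, hA, innerSL_apply_apply, orthonormal_iff_ite.mp b.orthonormal] at h
  rw [b.repr_apply_apply, h.unique (hasSum_single i fun j hj => by simp [Ne.symm hj])]
  simp [mul_comm]

variable {T : ℝ} [Fact (0 < T)]

theorem fourierCoeff_fourier_mul (f : AddCircle T → ℂ) (m k : ℤ) :
    fourierCoeff (⇑(fourier m) * f) k = fourierCoeff f (k - m) := by
  simp only [fourierCoeff, Pi.mul_apply, smul_eq_mul, ← mul_assoc, ← fourier_add]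
  ring_nf

theorem memLp_conj_mul_fourier (f : Lp ℂ 2 (haarAddCircle (T := T))) (k : ℤ) :
    MemLp (fun x => conj (f x) * fourier k x) 2 haarAddCircle := by
  refine (Lp.memLp f).of_le_mul (c := 1)
    ((Complex.continuous_conj.comp_aestronglyMeasurable (Lp.aestronglyMeasurable f)).mul
      (map_continuous (fourier k)).aestronglyMeasurable)
    (.of_forall fun x => ?_)
  simp [fourier_apply, Circle.norm_coe]

noncomputable def conjMulFourier (f : Lp ℂ 2 (haarAddCircle (T := T))) (k : ℤ) :
    Lp ℂ 2 (haarAddCircle (T := T)) :=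
  (memLp_conj_mul_fourier f k).toLp _

theorem inner_conjMulFourier (f g : Lp ℂ 2 (haarAddCircle (T := T))) (k : ℤ) :
    inner ℂ (conjMulFourier f k) g = fourierCoeff (⇑f * ⇑g) k := by
  rw [L2.inner_def, fourierCoeff]
  refine integral_congr_ae ?_
  filter_upwards [(memLp_conj_mul_fourier f k).coeFn_toLp] with x hx
  rw [conjMulFourier, RCLike.inner_apply, hx, fourier_neg]
  simp only [map_mul, Complex.conj_conj, Pi.mul_apply, smul_eq_mul]
  ring

theorem hasSum_fourierCoeff_mul (f g : Lp ℂ 2 (haarAddCircle (T := T))) (k : ℤ) :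
    HasSum (fun m => fourierCoeff f (k - m) * fourierCoeff g m) (fourierCoeff (⇑f * ⇑g) k) := by
  have h := fourierBasis.hasSum_inner_mul_inner (conjMulFourier f k) g
  simp only [inner_conjMulFourier, ← fourierBasis.repr_apply_apply, fourierBasis_repr] at h
  refine h.congr_fun fun m => ?_
  rw [coe_fourierBasis, fourierCoeff_congr_ae ((Filter.EventuallyEq.refl _ _).mul
    (coeFn_fourierLp 2 m)), mul_comm (f : AddCircle T → ℂ), fourierCoeff_fourier_mul]

theorem hasSum_fourierCoeff_of_ae_eq_mul_add_mul {f₁ g₁ f₂ g₂ r : Lp ℂ 2 (haarAddCircle (T := T))}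
    (hr : ∀ᵐ x ∂haarAddCircle, r x = f₁ x * g₁ x + f₂ x * g₂ x) (k : ℤ) :
    HasSum (fun m => fourierCoeff f₁ (k - m) * fourierCoeff g₁ m
      + fourierCoeff f₂ (k - m) * fourierCoeff g₂ m) (fourierCoeff r k) := by
  rw [fourierCoeff_congr_ae (show ⇑r =ᵐ[haarAddCircle] ⇑f₁ * ⇑g₁ + ⇑f₂ * ⇑g₂ from hr),
    fourierCoeff.add ((Lp.memLp f₁).integrable_mul (Lp.memLp g₁))
      ((Lp.memLp f₂).integrable_mul (Lp.memLp g₂))]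
  exact (hasSum_fourierCoeff_mul f₁ g₁ k).add (hasSum_fourierCoeff_mul f₂ g₂ k)

theorem stmt_3 (T : ℝ) [hT : Fact (0 < T)]
    (H : Lp ℂ 2 (@AddCircle.haarAddCircle T hT) →L[ℂ] Lp ℂ 2 (@AddCircle.haarAddCircle T hT))
    (hH : ∀ n : ℤ, H (fourierLp 2 n) = (Int.sign n : ℂ) • fourierLp 2 n)
    (u v p q : Lp ℂ 2 (@AddCircle.haarAddCircle T hT))
    (hp : ∀ᵐ x ∂(@AddCircle.haarAddCircle T hT),
      p x = u x * v x + (H u) x * (H v) x)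
    (hq : ∀ᵐ x ∂(@AddCircle.haarAddCircle T hT),
      q x = u x * (H v) x + v x * (H u) x) :
    H p = q := by
  have hHcoeff (f : Lp ℂ 2 haarAddCircle) (k : ℤ) :
      fourierCoeff (H f) k = k.sign * fourierCoeff f k := by
    rw [← fourierBasis_repr, ← fourierBasis_repr,
      fourierBasis.repr_apply_of_apply_eq_smul (by simpa only [coe_fourierBasis] using hH)]
  refine fourierBasis.repr.injective (lp.ext (funext fun k => ?_))
  rw [fourierBasis_repr, fourierBasis_repr, hHcoeff]
  have hpk := (hasSum_fourierCoeff_of_ae_eq_mul_add_mul hp k).mul_left (k.sign : ℂ)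
  have hqk := hasSum_fourierCoeff_of_ae_eq_mul_add_mul (f₁ := u) (g₁ := H v) (f₂ := H u) (g₂ := v)
    (hq.mono fun x hx => hx.trans (by ring)) k
  refine hpk.unique (hqk.congr_fun fun m => ?_)
  have hsign : (k.sign : ℂ) * (1 + (k - m).sign * m.sign) = (k - m).sign + m.sign := by
    exact_mod_cast sub_add_cancel k m ▸ Int.sign_add_mul_one_add_sign_mul_sign (k - m) m
  simp only [hHcoeff]
  linear_combination fourierCoeff u (k - m) * fourierCoeff v m * hsign
end

section
/- For a smooth function f on the circle, Λ∘[𝓗, 𝓗f]∘Λ = Λ∘f∘Λ − D∘f∘D as operators on smooth functions, where f and 𝓗f act by multiplication. -/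
/-!
The `m`-th coefficients of both sides are absolutely convergent series `∑ₙ a(m-n) μ(m,n) c(n)`
(`a` is summable and so is `|n| c(n)`), so it suffices to compare the symbols `μ` term by term.
On the left, `|m| (sgn m · sgn(m-n) |n| - sgn(m-n) sgn n |n|) = sgn(m-n) (m|n| - |m|n)`, which
equals the right-hand symbol `|m||n| - mn`: both vanish when `m` and `n` have the same sign,
and both are `-2mn` otherwise, where `sgn(m-n) = sgn m`.
-/

lemma Int.sign_sub_mul_mul_abs_sub_abs_mul (m n : ℤ) :
    (m - n).sign * (m * |n| - |m| * n) = |m| * |n| - m * n := by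
  rcases le_or_gt 0 m with hm | hm <;> rcases le_or_gt 0 n with hn | hn
  · rw [abs_of_nonneg hm, abs_of_nonneg hn]; ring
  · rw [Int.sign_eq_one_iff_pos.mpr (by omega), abs_of_nonneg hm, abs_of_neg hn]; ring
  · rw [Int.sign_eq_neg_one_iff_neg.mpr (by omega), abs_of_neg hm, abs_of_nonneg hn]; ring
  · rw [abs_of_neg hm, abs_of_neg hn]; ring

lemma norm_intCast_sign_le_one {R : Type*} [NormedRing R] [NormOneClass R] (x : ℤ) :
    ‖((x.sign : ℤ) : R)‖ ≤ 1 := by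
  rcases Int.sign_trichotomy x with h | h | h <;> simp [h]

lemma summable_mul_of_norm_le {ι R : Type*} [NormedRing R] [CompleteSpace R] {b w : ι → R}
    {C : ℝ} (hb : ∀ i, ‖b i‖ ≤ C) (hw : Summable fun i => ‖w i‖) :
    Summable fun i => b i * w i :=
  .of_norm_bounded (hw.mul_left C) fun i =>
    (norm_mul_le _ _).trans (mul_le_mul_of_nonneg_right (hb i) (norm_nonneg _))

lemma summable_mul_shift_mul {R : Type*} [NormedRing R] [CompleteSpace R] {a s w : ℤ → R}
    (ha : Summable fun n => ‖a n‖) (hs : ∀ n, ‖s n‖ ≤ 1) (hw : Summable fun n => ‖w n‖)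
    (m : ℤ) : Summable fun n => s n * a (m - n) * w n := by
  refine summable_mul_of_norm_le (C := ∑' n, ‖a n‖) (fun n => ?_) hw
  calc ‖s n * a (m - n)‖ ≤ ‖s n‖ * ‖a (m - n)‖ := norm_mul_le _ _
    _ ≤ 1 * ∑' n, ‖a n‖ := by
      gcongr
      · exact hs n
      · exact ha.le_tsum _ fun _ _ => norm_nonneg _
    _ = ∑' n, ‖a n‖ := one_mul _

lemma fourier_symbol_identity (m n : ℤ) (x y : ℂ) :
    ((|m| : ℤ) : ℂ) * ((m.sign : ℂ) * ((m - n).sign * x * ((|n| : ℤ) : ℂ) * y))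
        - ((|m| : ℤ) : ℂ) * ((m - n).sign * x * (n.sign : ℂ) * ((|n| : ℤ) : ℂ) * y)
      = ((|m| : ℤ) : ℂ) * (x * ((|n| : ℤ) : ℂ) * y) - (m : ℂ) * (x * (n : ℂ) * y) := by
  have h := congrArg (Int.cast : ℤ → ℂ) (Int.sign_sub_mul_mul_abs_sub_abs_mul m n)
  have hm := congrArg (Int.cast : ℤ → ℂ) (Int.sign_mul_abs m)
  have hn := congrArg (Int.cast : ℤ → ℂ) (Int.sign_mul_abs n)
  push_cast at h hm hn
  linear_combination (x * y) * h + ((m - n).sign * ((|n| : ℤ) : ℂ) * x * y) * hm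
    - (((|m| : ℤ) : ℂ) * (m - n).sign * x * y) * hn

theorem stmt_5 (a c : ℤ → ℂ)
    (ha : ∀ k : ℕ, Summable (fun n : ℤ => (|n| : ℝ) ^ k * ‖a n‖))
    (hc : ∀ k : ℕ, Summable (fun n : ℤ => (|n| : ℝ) ^ k * ‖c n‖)) :
    ∀ m : ℤ,
      ((|m| : ℤ) : ℂ) *
          ((Int.sign m : ℂ) *
              (∑' n : ℤ, (Int.sign (m - n) : ℂ) * a (m - n) * ((|n| : ℤ) : ℂ) * c n)
            - ∑' n : ℤ, (Int.sign (m - n) : ℂ) * a (m - n) * (Int.sign n : ℂ) *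
                ((|n| : ℤ) : ℂ) * c n)
        = ((|m| : ℤ) : ℂ) * (∑' n : ℤ, a (m - n) * ((|n| : ℤ) : ℂ) * c n)
          - (m : ℂ) * ∑' n : ℤ, a (m - n) * (n : ℂ) * c n := by
  intro m
  have hA : Summable fun n => ‖a n‖ := by simpa using ha 0
  have hW : Summable fun n : ℤ => ‖((|n| : ℤ) : ℂ) * c n‖ := by
    simpa [Complex.norm_intCast] using hc 1
  have hS : ∀ s : ℤ → ℂ, (∀ n, ‖s n‖ ≤ 1) →
      Summable fun n => s n * a (m - n) * ((|n| : ℤ) : ℂ) * c n := fun s hs =>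
    (summable_mul_shift_mul hA hs hW m).congr fun n => by ring
  have h1 := hS (fun n => ((m - n).sign : ℂ)) fun n => norm_intCast_sign_le_one (m - n)
  have h2 : Summable fun n => ((m - n).sign : ℂ) * a (m - n) * (n.sign : ℂ) *
      ((|n| : ℤ) : ℂ) * c n :=
    (hS (fun n => ((m - n).sign : ℂ) * (n.sign : ℂ)) fun n =>
      (norm_mul_le _ _).trans (mul_le_one₀ (norm_intCast_sign_le_one _) (norm_nonneg _)
        (norm_intCast_sign_le_one _))).congr fun n => by ring
  have h3 : Summable fun n => a (m - n) * ((|n| : ℤ) : ℂ) * c n :=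
    (hS 1 fun n => by simp).congr fun n => by simp
  have h4 : Summable fun n => a (m - n) * (n : ℂ) * c n :=
    (hS (fun n => (n.sign : ℂ)) fun n => norm_intCast_sign_le_one n).congr fun n => by
      linear_combination (a (m - n) * c n) *
        (by exact_mod_cast Int.sign_mul_abs n : (n.sign : ℂ) * ((|n| : ℤ) : ℂ) = n)
  rw [mul_sub, ← tsum_mul_left, ← tsum_mul_left, ← tsum_mul_left, ← tsum_mul_left,
    ← tsum_mul_left, ← (h1.mul_left _).mul_left _ |>.tsum_sub (h2.mul_left _),
    ← (h3.mul_left _).tsum_sub (h4.mul_left _)]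
  exact tsum_congr fun n => fourier_symbol_identity m n (a (m - n)) (c n)
end

section
/- For a real-valued smooth function b on the circle with Fourier expansion b = Σ_k b̂_k e^{ikθ}, define 𝓑(b) = −b·(Λb) + (𝓗b)·(Db) and b₊ = b̂₀/2 + Σ_{k≥1} b̂_k e^{ikθ}. Then 𝓑(b) = −4 Re(b₊ · Λ(conj(b₊))). -/
/-!
Split each Fourier series into its modes `k > 0`, `k = 0` and `k < 0`. Since `c (-k) = conj (c k)`,
the negative half is `±` the conjugate of the positive half, the sign being the parity of the
multiplier. With `P = Σ_{k≥1} c_k e^{ikθ}` and `L = Σ_{k≥1} k c_k e^{ikθ}` this gives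
`b = c₀ + P + P̄`, `Λb = L + L̄`, `𝓗b = P - P̄`, `Db = L - L̄`, `b₊ = c₀/2 + P`, `Λ(conj b₊) = L̄`,
and the identity becomes an algebraic one in `c₀ ∈ ℝ`, `P` and `L`.
-/

/-- The Fourier mode `e^{inθ}` on the circle. -/
noncomputable def fm (n : ℤ) (θ : ℝ) : ℂ := Complex.exp ((n : ℂ) * (θ : ℂ) * Complex.I)

open ComplexConjugate

lemma norm_fm (n : ℤ) (θ : ℝ) : ‖fm n θ‖ = 1 := by
  simp [fm, Complex.norm_exp]

lemma conj_fm (n : ℤ) (θ : ℝ) : conj (fm n θ) = fm (-n) θ := by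
  simp [fm, ← Complex.exp_conj, Complex.conj_I]

lemma fm_zero (θ : ℝ) : fm 0 θ = 1 := by simp [fm]

lemma Int.abs_sign_le_abs (n : ℤ) : |n.sign| ≤ |n| := by
  rcases eq_or_ne n 0 with rfl | hn
  · simp
  · rw [Int.abs_sign_of_ne_zero hn]
    exact Int.one_le_abs hn

section
variable {c : ℤ → ℂ}

lemma summable_intCast_mul_mul_fm {k : ℕ} (hc : Summable fun n : ℤ => (|n| : ℝ) ^ k * ‖c n‖)
    {w : ℤ → ℤ} (hw : ∀ n, |w n| ≤ |n| ^ k) (θ : ℝ) :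
    Summable fun n => (w n : ℂ) * c n * fm n θ := by
  refine Summable.of_norm_bounded hc fun n => ?_
  rw [norm_mul, norm_mul, norm_fm, mul_one, Complex.norm_intCast]
  gcongr
  exact_mod_cast hw n

lemma tsum_intCast_mul_mul_fm (hreal : ∀ n, c (-n) = conj (c n)) {w : ℤ → ℤ} {ε : ℤ}
    (hw : ∀ n, w (-n) = ε * w n) {θ : ℝ} (hs : Summable fun n => (w n : ℂ) * c n * fm n θ) :
    ∑' n, (w n : ℂ) * c n * fm n θ =
      w 0 * c 0 + (∑' k : ℕ, (w (k + 1) : ℂ) * c (k + 1) * fm (k + 1) θ)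
        + ε * conj (∑' k : ℕ, (w (k + 1) : ℂ) * c (k + 1) * fm (k + 1) θ) := by
  have hpos : Function.Injective fun k : ℕ => (k : ℤ) + 1 := fun a b h => by simpa using h
  have hneg : Function.Injective fun k : ℕ => -((k : ℤ) + 1) := fun a b h => by simpa using h
  have hsplit : ∑' n, (w n : ℂ) * c n * fm n θ =
      (∑' k : ℕ, (w (k + 1) : ℂ) * c (k + 1) * fm (k + 1) θ) + w 0 * c 0 * fm 0 θ
        + ∑' k : ℕ, (w (-(k + 1)) : ℂ) * c (-(k + 1)) * fm (-(k + 1)) θ :=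
    tsum_of_add_one_of_neg_add_one (hs.comp_injective hpos) (hs.comp_injective hneg)
  rw [hsplit, Complex.conj_tsum, ← tsum_mul_left, fm_zero]
  have hmirror : ∀ k : ℕ, (w (-((k : ℤ) + 1)) : ℂ) * c (-((k : ℤ) + 1)) * fm (-((k : ℤ) + 1)) θ
      = ε * conj ((w ((k : ℤ) + 1) : ℂ) * c ((k : ℤ) + 1) * fm ((k : ℤ) + 1) θ) := fun k => by
    rw [hw, hreal, map_mul, map_mul, conj_fm, map_intCast]
    push_cast
    ring
  simp only [hmirror]
  ring

end

lemma neg_four_re_identity {x : ℂ} (hx : conj x = x) (p l : ℂ) :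
    -(x + p + conj p) * (l + conj l) + (p - conj p) * (l - conj l)
      = (((-4 : ℝ) * ((x / 2 + p) * conj l).re : ℝ) : ℂ) := by
  have hconj : conj ((x / 2 + p) * conj l) = (x / 2 + conj p) * l := by
    simp [hx, map_ofNat]
  rw [Complex.ofReal_mul, Complex.re_eq_add_conj, hconj]
  push_cast
  ring

theorem stmt_9 (c : ℤ → ℂ)
    (hreal : ∀ n : ℤ, c (-n) = (starRingEnd ℂ) (c n))
    (hdecay : ∀ k : ℕ, Summable (fun n : ℤ => (|n| : ℝ) ^ k * ‖c n‖)) :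
    ∀ θ : ℝ,
      -(∑' n : ℤ, c n * fm n θ) * (∑' n : ℤ, ((|n| : ℤ) : ℂ) * c n * fm n θ)
          + (∑' n : ℤ, (Int.sign n : ℂ) * c n * fm n θ) *
            (∑' n : ℤ, (n : ℂ) * c n * fm n θ)
        = (((-4 : ℝ) *
            ((c 0 / 2 + ∑' k : ℕ, c ((k : ℤ) + 1) * fm ((k : ℤ) + 1) θ) *
              (∑' k : ℕ, ((k : ℂ) + 1) * (starRingEnd ℂ) (c ((k : ℤ) + 1)) *
                fm (-((k : ℤ) + 1)) θ)).re : ℝ) : ℂ) := by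
  intro θ
  have hsucc : ∀ k : ℕ, |(k : ℤ) + 1| = k + 1 := fun k => abs_of_nonneg (by positivity)
  set P := ∑' k : ℕ, c (k + 1) * fm (k + 1) θ
  set L := ∑' k : ℕ, ((k : ℂ) + 1) * c (k + 1) * fm (k + 1) θ
  have hb : ∑' n : ℤ, c n * fm n θ = c 0 + P + conj P := by
    simpa using tsum_intCast_mul_mul_fm hreal (w := fun _ => 1) (ε := 1) (by simp)
      (summable_intCast_mul_mul_fm (hdecay 0) (by simp) θ)
  have hΛb : ∑' n : ℤ, ((|n| : ℤ) : ℂ) * c n * fm n θ = L + conj L := by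
    simpa [hsucc] using tsum_intCast_mul_mul_fm hreal (w := fun n => |n|) (ε := 1) (by simp)
      (summable_intCast_mul_mul_fm (hdecay 1) (by simp) θ)
  have h𝓗b : ∑' n : ℤ, (Int.sign n : ℂ) * c n * fm n θ = P - conj P := by
    simpa [sub_eq_add_neg] using tsum_intCast_mul_mul_fm hreal (w := Int.sign) (ε := -1)
      (by simp) (summable_intCast_mul_mul_fm (hdecay 1)
        (fun n => (Int.abs_sign_le_abs n).trans (pow_one |n|).ge) θ)
  have hDb : ∑' n : ℤ, (n : ℂ) * c n * fm n θ = L - conj L := by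
    simpa [sub_eq_add_neg] using tsum_intCast_mul_mul_fm hreal (w := id) (ε := -1)
      (by simp) (summable_intCast_mul_mul_fm (hdecay 1) (fun n => (pow_one |n|).ge) θ)
  have hΛconj : ∑' k : ℕ, ((k : ℂ) + 1) * conj (c ((k : ℤ) + 1)) * fm (-((k : ℤ) + 1)) θ
      = conj L := by
    simp [L, Complex.conj_tsum, conj_fm]
  rw [hb, hΛb, h𝓗b, hDb, hΛconj]
  exact neg_four_re_identity (by simpa using (hreal 0).symm) P L
end

section
/- Let b be a smooth positive 2π-periodic function with ∫₀^{2π} b^{-1} dθ = 2π and suppose (1/12π)∫₀^{2π} (b'(θ)²/b(θ) − b(θ)) dθ ≤ c₁ and (1/2π)∫₀^{2π} b dθ ≤ c₀ for constants c₀, c₁ > 0. Then exp(−2π(6c₁+c₀)^{1/2}) ≤ b(θ) ≤ exp(2π(6c₁+c₀)^{1/2}) for all θ. -/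
/- STATEMENT 15: for a smooth positive 2π-periodic function `b` with `∫₀^{2π} b⁻¹ = 2π`,
   if `(1/12π)∫₀^{2π}((b')²/b − b) ≤ c₁` and `(1/2π)∫₀^{2π} b ≤ c₀` with `c₀, c₁ > 0`, then
   `exp(−2π√(6c₁+c₀)) ≤ b ≤ exp(2π√(6c₁+c₀))`. -/
open MeasureTheory Real in
theorem stmt_15 (b : ℝ → ℝ) (c₀ c₁ : ℝ) (hc₀ : 0 < c₀) (hc₁ : 0 < c₁)
    (hb : ContDiff ℝ (⊤ : ℕ∞) b)
    (hper : Function.Periodic b (2 * Real.pi))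
    (hpos : ∀ θ : ℝ, 0 < b θ)
    (hnorm : ∫ θ in (0:ℝ)..(2 * Real.pi), (b θ)⁻¹ = 2 * Real.pi)
    (h1 : (1 / (12 * Real.pi)) *
        ∫ θ in (0:ℝ)..(2 * Real.pi), ((deriv b θ) ^ 2 / b θ - b θ) ≤ c₁)
    (h0 : (1 / (2 * Real.pi)) * ∫ θ in (0:ℝ)..(2 * Real.pi), b θ ≤ c₀) :
    ∀ θ : ℝ,
      Real.exp (-(2 * Real.pi * Real.sqrt (6 * c₁ + c₀))) ≤ b θ ∧
        b θ ≤ Real.exp (2 * Real.pi * Real.sqrt (6 * c₁ + c₀)) := by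
  have hπ := Real.pi_pos
  set T : ℝ := 2 * Real.pi with hTdef
  have hT0 : (0:ℝ) < T := by positivity
  have hbc : Continuous b := hb.continuous
  have hb'c : Continuous (deriv b) := hb.continuous_deriv (by simp)
  have hbne : ∀ θ, b θ ≠ 0 := fun θ => (hpos θ).ne'
  have cinv : Continuous fun θ => (b θ)⁻¹ := hbc.inv₀ hbne
  have csq : Continuous fun θ => (deriv b θ) ^ 2 / b θ := (hb'c.pow 2).div hbc hbne
  have cabs : Continuous fun θ => |deriv b θ| / b θ := hb'c.abs.div hbc hbne
  have cratio : Continuous fun θ => deriv b θ / b θ := hb'c.div hbc hbne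
  -- Step 1 : A := ∫ (b')²/b  ≤ T * (6c₁+c₀)
  set A : ℝ := ∫ θ in (0:ℝ)..T, (deriv b θ) ^ 2 / b θ with hAdef
  have hA0 : 0 ≤ A := intervalIntegral.integral_nonneg hT0.le
    (fun x _ => div_nonneg (sq_nonneg _) (hpos x).le)
  have hsplit : (∫ θ in (0:ℝ)..T, ((deriv b θ) ^ 2 / b θ - b θ))
      = A - ∫ θ in (0:ℝ)..T, b θ :=
    intervalIntegral.integral_sub (csq.intervalIntegrable _ _) (hbc.intervalIntegrable _ _)
  have hA : A ≤ T * (6 * c₁ + c₀) := by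
    have e1 : (∫ θ in (0:ℝ)..T, ((deriv b θ) ^ 2 / b θ - b θ)) ≤ 12 * Real.pi * c₁ := by
      rw [one_div, inv_mul_le_iff₀ (by positivity)] at h1
      linarith
    have e0 : (∫ θ in (0:ℝ)..T, b θ) ≤ T * c₀ := by
      rw [one_div, inv_mul_le_iff₀ (by positivity)] at h0
      linarith
    have e2 : T * (6 * c₁ + c₀) = 12 * Real.pi * c₁ + T * c₀ := by rw [hTdef]; ring
    linarith
  -- Step 2 : Cauchy–Schwarz :  I := ∫ |b'|/b ≤ √A * √T
  set I : ℝ := ∫ θ in (0:ℝ)..T, |deriv b θ| / b θ with hIdef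
  have key : ∀ l : ℝ, 0 < l → I ≤ l / 2 * A + 1 / (2 * l) * T := by
    intro l hl
    have hpt : ∀ x ∈ Set.Icc (0:ℝ) T,
        |deriv b x| / b x ≤ l / 2 * ((deriv b x) ^ 2 / b x) + 1 / (2 * l) * (b x)⁻¹ := by
      intro x _
      have hbx := hpos x
      have hnum : 0 ≤ l ^ 2 * (deriv b x) ^ 2 + 1 - 2 * l * |deriv b x| := by
        nlinarith [sq_nonneg (l * |deriv b x| - 1), sq_abs (deriv b x)]
      have h2 : 0 ≤ (l ^ 2 * (deriv b x) ^ 2 + 1 - 2 * l * |deriv b x|) / (2 * l * b x) :=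
        div_nonneg hnum (by positivity)
      have he : (l ^ 2 * (deriv b x) ^ 2 + 1 - 2 * l * |deriv b x|) / (2 * l * b x)
          = l / 2 * ((deriv b x) ^ 2 / b x) + 1 / (2 * l) * (b x)⁻¹ - |deriv b x| / b x := by
        field_simp
      linarith [he ▸ h2]
    have hmono : I ≤ ∫ x in (0:ℝ)..T,
        (l / 2 * ((deriv b x) ^ 2 / b x) + 1 / (2 * l) * (b x)⁻¹) :=
      intervalIntegral.integral_mono_on hT0.le (cabs.intervalIntegrable _ _)
        (((continuous_const.mul csq).add (continuous_const.mul cinv)).intervalIntegrable _ _) hpt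
    calc I ≤ _ := hmono
      _ = l / 2 * A + 1 / (2 * l) * T := by
          rw [intervalIntegral.integral_add (f := fun θ => l / 2 * ((deriv b θ) ^ 2 / b θ))
            (g := fun θ => 1 / (2 * l) * (b θ)⁻¹) ((continuous_const.mul csq).intervalIntegrable _ _)
            ((continuous_const.mul cinv).intervalIntegrable _ _),
            intervalIntegral.integral_const_mul, intervalIntegral.integral_const_mul, hnorm]
  have hCS : I ≤ Real.sqrt A * Real.sqrt T := by
    set s := Real.sqrt A with hs
    set t := Real.sqrt T with ht
    have hs0 : 0 ≤ s := Real.sqrt_nonneg _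
    have ht0 : 0 < t := Real.sqrt_pos.mpr hT0
    have hsA : s ^ 2 = A := Real.sq_sqrt hA0
    have htT : t ^ 2 = T := Real.sq_sqrt hT0.le
    refine le_of_forall_pos_le_add ?_
    intro ε hε
    set u : ℝ := s + ε / t with hu
    have hu0 : 0 < u := by positivity
    have hsu : s ≤ u := le_add_of_nonneg_right (by positivity)
    have hl0 : 0 < t / u := by positivity
    have e : s * t + ε = u * t := by rw [hu]; field_simp
    calc I ≤ t / u / 2 * A + 1 / (2 * (t / u)) * T := key (t / u) hl0
      _ = (t * s ^ 2) / (2 * u) + u * t / 2 := by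
          rw [← hsA, ← htT]; field_simp
      _ ≤ u * t / 2 + u * t / 2 := by
          have : (t * s ^ 2) / (2 * u) ≤ u * t / 2 := by
            rw [div_le_div_iff₀ (by positivity) (by positivity)]
            nlinarith
          linarith
      _ = s * t + ε := by rw [← e]; ring
  have hbound : Real.sqrt A * Real.sqrt T ≤ T * Real.sqrt (6 * c₁ + c₀) := by
    have h6 : (0:ℝ) ≤ 6 * c₁ + c₀ := by positivity
    calc Real.sqrt A * Real.sqrt T ≤ Real.sqrt (T * (6 * c₁ + c₀)) * Real.sqrt T := by
          gcongr
      _ = (Real.sqrt T * Real.sqrt T) * Real.sqrt (6 * c₁ + c₀) := by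
          rw [Real.sqrt_mul hT0.le]; ring
      _ = T * Real.sqrt (6 * c₁ + c₀) := by rw [Real.mul_self_sqrt hT0.le]
  -- Step 3 : there is θ₀ with b θ₀ = 1
  have hgint : (∫ θ in (0:ℝ)..T, ((b θ)⁻¹ - 1)) = 0 := by
    rw [intervalIntegral.integral_sub (cinv.intervalIntegrable _ _) intervalIntegrable_const,
      hnorm, intervalIntegral.integral_const]
    simp
  have cg : Continuous fun θ => (b θ)⁻¹ - 1 := cinv.sub continuous_const
  have hx : ∃ x ∈ Set.Icc (0:ℝ) T, (b x)⁻¹ - 1 ≤ 0 := by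
    by_contra h
    push_neg at h
    have hposint : 0 < ∫ θ in (0:ℝ)..T, ((b θ)⁻¹ - 1) :=
      intervalIntegral.intervalIntegral_pos_of_pos_on (cg.intervalIntegrable _ _)
        (fun x hx => h x ⟨hx.1.le, hx.2.le⟩) hT0
    linarith [hgint ▸ hposint]
  have hy : ∃ y ∈ Set.Icc (0:ℝ) T, 0 ≤ (b y)⁻¹ - 1 := by
    by_contra h
    push_neg at h
    have hposint : 0 < ∫ θ in (0:ℝ)..T, -((b θ)⁻¹ - 1) :=
      intervalIntegral.intervalIntegral_pos_of_pos_on (cg.neg.intervalIntegrable _ _)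
        (fun x hx => by simpa using h x ⟨hx.1.le, hx.2.le⟩) hT0
    rw [intervalIntegral.integral_neg, hgint] at hposint
    simp at hposint
  obtain ⟨x, -, hgx⟩ := hx
  obtain ⟨y, -, hgy⟩ := hy
  have h0mem : (0:ℝ) ∈ Set.uIcc ((b x)⁻¹ - 1) ((b y)⁻¹ - 1) :=
    Set.mem_uIcc.mpr (Or.inl ⟨hgx, hgy⟩)
  obtain ⟨θ₀, -, hθ₀⟩ := intermediate_value_uIcc (f := fun θ => (b θ)⁻¹ - 1)
    cg.continuousOn h0mem
  have hbθ₀ : b θ₀ = 1 := by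
    have : (b θ₀)⁻¹ = 1 := by linarith [hθ₀]
    exact inv_eq_one.mp this
  -- periodicity of |b'|/b
  have hderp : ∀ x, deriv b (x + T) = deriv b x := by
    intro x
    have h : (fun y => b (y + T)) = b := funext hper
    calc deriv b (x + T) = deriv (fun y => b (y + T)) x := (deriv_comp_add_const b T x).symm
      _ = deriv b x := by rw [h]
  have hperabs : Function.Periodic (fun t => |deriv b t| / b t) T := fun x => by
    simp only [hderp x, hper x]
  -- Step 4 : the conclusion
  intro θ
  set n : ℤ := ⌈(θ₀ - θ) / T⌉ with hn
  set θ' : ℝ := θ + (n : ℝ) * T with hθ'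
  have hbb : b θ' = b θ := (hper.int_mul n) θ
  have hge : θ₀ ≤ θ' := by
    have h := Int.le_ceil ((θ₀ - θ) / T)
    rw [div_le_iff₀ hT0] at h
    rw [← hn] at h
    linarith
  have hle : θ' ≤ θ₀ + T := by
    have h : ((n : ℝ)) < (θ₀ - θ) / T + 1 := by exact_mod_cast Int.ceil_lt_add_one ((θ₀ - θ) / T)
    have h2 : (θ₀ - θ) / T * T = θ₀ - θ := div_mul_cancel₀ _ hT0.ne'
    nlinarith
  have hlog : ∀ x : ℝ, HasDerivAt (fun t => Real.log (b t)) (deriv b x / b x) x := fun x =>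
    ((hb.differentiable (by simp) x).hasDerivAt).log (hbne x)
  have hFTC : ∫ t in θ₀..θ', deriv b t / b t = Real.log (b θ') - Real.log (b θ₀) :=
    intervalIntegral.integral_eq_sub_of_hasDerivAt (fun x _ => hlog x)
      (cratio.intervalIntegrable _ _)
  have habs : |Real.log (b θ)| ≤ I := by
    have h1 : |Real.log (b θ)| = |∫ t in θ₀..θ', deriv b t / b t| := by
      rw [hFTC, hbb, hbθ₀, Real.log_one, sub_zero]
    rw [h1]
    calc |∫ t in θ₀..θ', deriv b t / b t| ≤ ∫ t in θ₀..θ', |deriv b t / b t| :=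
          intervalIntegral.abs_integral_le_integral_abs hge
      _ = ∫ t in θ₀..θ', |deriv b t| / b t := by
          apply intervalIntegral.integral_congr
          intro z _
          show |deriv b z / b z| = |deriv b z| / b z
          rw [abs_div, abs_of_pos (hpos z)]
      _ ≤ ∫ t in θ₀..(θ₀ + T), |deriv b t| / b t :=
          intervalIntegral.integral_mono_interval le_rfl hge hle
            (Filter.Eventually.of_forall fun z => div_nonneg (abs_nonneg _) (hpos z).le)
            (cabs.intervalIntegrable _ _)
      _ = I := by
          have h := hperabs.intervalIntegral_add_eq θ₀ 0
          simpa using h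
  have hM : |Real.log (b θ)| ≤ T * Real.sqrt (6 * c₁ + c₀) :=
    habs.trans (hCS.trans hbound)
  obtain ⟨hlo, hhi⟩ := abs_le.mp hM
  constructor
  · rw [← Real.exp_log (hpos θ)]
    exact Real.exp_le_exp.mpr hlo
  · rw [← Real.exp_log (hpos θ)]
    exact Real.exp_le_exp.mpr hhi
end
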